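/- Homogeneous temporal GNNs are as expressive as inhomogeneous ones: every R²-TGNN (A_1,…,A_T) with possibly different per-timestamp models is equivalent, as a node-feature transformation on temporal graphs with T timestamps, to a homogeneous R²-TGNN in which all timestamps share the same model; the construction runs all T models in parallel on T disjoint feature slices of dimension T·d. -/

import Mathlib

inductive Var : Type
  | x | y
deriving DecidableEq

structure MRGraph (P1 P2 : Type) where
  V : Type
  [fintV : Fintype V]
  [decV : DecidableEq V]
  unary : P1 → V → Prop
  rel : P2 → V → V → Prop
  [decU : ∀ p, DecidablePred (unary p)]
  [decR : ∀ r, DecidableRel (rel r)]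

attribute [instance] MRGraph.fintV MRGraph.decV MRGraph.decU MRGraph.decR

inductive FOC2 (P1 P2 : Type) : Type
  | tru : FOC2 P1 P2
  | atom : P1 → Var → FOC2 P1 P2
  | rel : P2 → Var → Var → FOC2 P1 P2
  | and : FOC2 P1 P2 → FOC2 P1 P2 → FOC2 P1 P2
  | or : FOC2 P1 P2 → FOC2 P1 P2 → FOC2 P1 P2
  | not : FOC2 P1 P2 → FOC2 P1 P2
  | exge : ℕ → Var → FOC2 P1 P2 → FOC2 P1 P2

variable {P1 P2 : Type}

/-- Satisfaction of a `FOC2` formula in a multi-relational graph under an assignment. -/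
def MRGraph.sat (G : MRGraph P1 P2) : (Var → G.V) → FOC2 P1 P2 → Prop
  | _, .tru => True
  | σ, .atom p v => G.unary p (σ v)
  | σ, .rel r u w => G.rel r (σ u) (σ w)
  | σ, .and φ ψ => G.sat σ φ ∧ G.sat σ ψ
  | σ, .or φ ψ => G.sat σ φ ∨ G.sat σ ψ
  | σ, .not φ => ¬ G.sat σ φ
  | σ, .exge n v φ => ∃ S : Finset G.V, S.card = n ∧ ∀ a ∈ S, G.sat (Function.update σ v a) φ

/-- Quantifier depth. -/
def FOC2.depth : FOC2 P1 P2 → ℕ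
  | .tru => 0
  | .atom _ _ => 0
  | .rel _ _ _ => 0
  | .and φ ψ => max φ.depth ψ.depth
  | .or φ ψ => max φ.depth ψ.depth
  | .not φ => φ.depth
  | .exge _ _ φ => φ.depth + 1

/-- All counting thresholds are at most `m`. -/
def FOC2.thresholdsLe (m : ℕ) : FOC2 P1 P2 → Prop
  | .tru => True
  | .atom _ _ => True
  | .rel _ _ _ => True
  | .and φ ψ => φ.thresholdsLe m ∧ ψ.thresholdsLe m
  | .or φ ψ => φ.thresholdsLe m ∧ ψ.thresholdsLe m
  | .not φ => φ.thresholdsLe m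
  | .exge n _ φ => n ≤ m ∧ φ.thresholdsLe m

/-- Free variables. -/
def FOC2.freeVars : FOC2 P1 P2 → Finset Var
  | .tru => ∅
  | .atom _ v => {v}
  | .rel _ u w => {u, w}
  | .and φ ψ => φ.freeVars ∪ ψ.freeVars
  | .or φ ψ => φ.freeVars ∪ ψ.freeVars
  | .not φ => φ.freeVars
  | .exge _ v φ => φ.freeVars \ {v}

/-- Parse-tree size. -/
def FOC2.size : FOC2 P1 P2 → ℕ
  | .tru => 1
  | .atom _ _ => 1
  | .rel _ _ _ => 1
  | .and φ ψ => φ.size + ψ.size + 1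
  | .or φ ψ => φ.size + ψ.size + 1
  | .not φ => φ.size + 1
  | .exge _ _ φ => φ.size + 1

/-- A generic R²-GNN run: per-layer combination functions taking the node's previous
feature, for each relation the multiset of neighbours' features, and the global multiset. -/
def runGNN (G : MRGraph P1 P2) {X : Type} (h0 : G.V → X)
    (C : ℕ → X → (P2 → Multiset X) → Multiset X → X) : ℕ → G.V → X
  | 0, v => h0 v
  | i + 1, v =>
    C i (runGNN G h0 C i v)
      (fun r => (Finset.univ.filter (fun u => G.rel r v u)).val.map (runGNN G h0 C i))
      (Finset.univ.val.map (runGNN G h0 C i))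

/-- A temporal knowledge graph with `T` snapshots over a common node set. -/
structure TGraph (P1 P2 : Type) (T : ℕ) where
  V : Type
  [fintV : Fintype V]
  [decV : DecidableEq V]
  unary : Fin T → P1 → V → Prop
  rel : Fin T → P2 → V → V → Prop
  [decU : ∀ t p, DecidablePred (unary t p)]
  [decR : ∀ t r, DecidableRel (rel t r)]

attribute [instance] TGraph.fintV TGraph.decV TGraph.decU TGraph.decR

variable {T : ℕ}

/-- The snapshot at time `t`. -/
def TGraph.snap (G : TGraph P1 P2 T) (t : Fin T) : MRGraph P1 P2 where
  V := G.V
  unary := G.unary t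
  rel := G.rel t
  decU := G.decU t
  decR := G.decR t

/-- The collapse `H`: the union over all timestamps of the temporalized snapshots, a
static graph over the timestamped predicates. -/
def TGraph.collapse (G : TGraph P1 P2 T) : MRGraph (P1 × Fin T) (P2 × Fin T) where
  V := G.V
  unary := fun p v => G.unary p.2 p.1 v
  rel := fun r a b => G.rel r.2 r.1 a b
  decU := fun p => G.decU p.2 p.1
  decR := fun r => G.decR r.2 r.1

/-- A run of an R²-TGNN: at each timestamp `t`, the R²-GNN `C t` (with `Lt t` layers)
is run on snapshot `t`, initialized with the encoding of the one-hot unary information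
at time `t` together with the previous timestamp's feature. -/
def runT (G : TGraph P1 P2 T) {X : Type} (xinit : X)
    (enc : (P1 → Bool) → X → X)
    (C : Fin T → ℕ → X → (P2 → Multiset X) → Multiset X → X)
    (Lt : Fin T → ℕ) : ℕ → G.V → X
  | 0, _ => xinit
  | t + 1, v =>
    if h : t < T then
      runGNN (G.snap ⟨t, h⟩)
        (fun u => enc (fun q => @decide (G.unary ⟨t, h⟩ q u) (G.decU ⟨t, h⟩ q u))
          (runT G xinit enc C Lt t u))
        (C ⟨t, h⟩) (Lt ⟨t, h⟩) v
    else runT G xinit enc C Lt t v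

/-- Two nodes are connected if some relation holds between them in some direction. -/
def connected (G : MRGraph P1 P2) [Fintype P2] (p : G.V × G.V) : Prop :=
  ∃ r : P2, G.rel r p.1 p.2 ∨ G.rel r p.2 p.1

instance (G : MRGraph P1 P2) [Fintype P2] (p : G.V × G.V) : Decidable (connected G p) := by
  unfold connected; infer_instance

/-- Unary predicates of the transformed graph: original unary predicates live on the
primal (original) nodes, and the fresh predicate `primal` marks them. -/
def transUnaryB (G : MRGraph P1 P2) [Fintype P2] :
    (P1 ⊕ Unit) → (G.V ⊕ {p : G.V × G.V // connected G p}) → Bool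
  | Sum.inl q, Sum.inl v => decide (G.unary q v)
  | Sum.inr _, Sum.inl _ => true
  | _, _ => false

/-- Relations of the transformed graph: original relations are moved onto the pairs
`(e_ab, e_ba)` of added nodes, `aux1` (encoded `true`) connects `a` with `e_ab`, and
`aux2` (encoded `false`) connects `e_ab` with `e_ba`. -/
def transRelB (G : MRGraph P1 P2) [Fintype P2] :
    (P2 ⊕ Bool) → (G.V ⊕ {p : G.V × G.V // connected G p}) →
      (G.V ⊕ {p : G.V × G.V // connected G p}) → Bool
  | Sum.inl q, Sum.inr e, Sum.inr e' =>
      decide (e'.val = (e.val.2, e.val.1)) && decide (G.rel q e.val.1 e.val.2)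
  | Sum.inr true, Sum.inl a, Sum.inr e => decide (e.val.1 = a)
  | Sum.inr true, Sum.inr e, Sum.inl a => decide (e.val.1 = a)
  | Sum.inr false, Sum.inr e, Sum.inr e' => decide (e'.val = (e.val.2, e.val.1))
  | _, _, _ => false

/-- The graph transformation `F` on static multi-relational graphs. -/
def transF (G : MRGraph P1 P2) [Fintype P2] : MRGraph (P1 ⊕ Unit) (P2 ⊕ Bool) where
  V := G.V ⊕ {p : G.V × G.V // connected G p}
  unary := fun q v => transUnaryB G q v = true
  rel := fun r a b => transRelB G r a b = true
  decU := fun _ _ => instDecidableEqBool _ _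
  decR := fun _ _ _ => instDecidableEqBool _ _

/-- Two nodes of a temporal graph are connected if some relation holds between them at
some timestamp. -/
def connectedT (G : TGraph P1 P2 T) [Fintype P2] (p : G.V × G.V) : Prop :=
  ∃ (t : Fin T) (r : P2), G.rel t r p.1 p.2 ∨ G.rel t r p.2 p.1

instance (G : TGraph P1 P2 T) [Fintype P2] (p : G.V × G.V) :
    Decidable (connectedT G p) := by
  unfold connectedT; infer_instance

/-- Per-snapshot unary predicates of the transformed temporal graph. -/
def transTUnaryB (G : TGraph P1 P2 T) [Fintype P2] (t : Fin T) :
    (P1 ⊕ Unit) → (G.V ⊕ {p : G.V × G.V // connectedT G p}) → Bool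
  | Sum.inl q, Sum.inl v => decide (G.unary t q v)
  | Sum.inr _, Sum.inl _ => true
  | _, _ => false

/-- Per-snapshot relations of the transformed temporal graph: original relations of
snapshot `t` are moved onto the added node pairs, while the `aux1`/`aux2` structural
edges are present at every timestamp. -/
def transTRelB (G : TGraph P1 P2 T) [Fintype P2] (t : Fin T) :
    (P2 ⊕ Bool) → (G.V ⊕ {p : G.V × G.V // connectedT G p}) →
      (G.V ⊕ {p : G.V × G.V // connectedT G p}) → Bool
  | Sum.inl q, Sum.inr e, Sum.inr e' =>
      decide (e'.val = (e.val.2, e.val.1)) && decide (G.rel t q e.val.1 e.val.2)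
  | Sum.inr true, Sum.inl a, Sum.inr e => decide (e.val.1 = a)
  | Sum.inr true, Sum.inr e, Sum.inl a => decide (e.val.1 = a)
  | Sum.inr false, Sum.inr e, Sum.inr e' => decide (e'.val = (e.val.2, e.val.1))
  | _, _, _ => false

/-- The per-snapshot graph transformation `F^T` of a temporal graph. -/
def transT (G : TGraph P1 P2 T) [Fintype P2] : TGraph (P1 ⊕ Unit) (P2 ⊕ Bool) T where
  V := G.V ⊕ {p : G.V × G.V // connectedT G p}
  unary := fun t q v => transTUnaryB G t q v = true
  rel := fun t r a b => transTRelB G t r a b = true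
  decU := fun _ _ _ => instDecidableEqBool _ _
  decR := fun _ _ _ _ => instDecidableEqBool _ _

/-!
The homogeneous model carries a clock next to the simulated feature. The encoder advances
the clock, so during timestamp `t` every node holds the clock value `t + 1`; each layer
keeps the clock and applies layer `i` of the model of the timestamp it marks, or the
identity once that model has run out of layers. Running `max_t L_t` layers therefore
reproduces every `A_t` exactly, and forgetting the clock recovers the original features.
-/

section Homogenization

variable {X Y : Type}

def truncateLayers (C : ℕ → X → (P2 → Multiset X) → Multiset X → X) (L : ℕ) :
    ℕ → X → (P2 → Multiset X) → Multiset X → X :=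
  fun i x nbr glob => if i < L then C i x nbr glob else x

theorem runGNN_truncateLayers (G : MRGraph P1 P2) (h0 : G.V → X)
    (C : ℕ → X → (P2 → Multiset X) → Multiset X → X) (L : ℕ) (i : ℕ) :
    runGNN G h0 (truncateLayers C L) i = runGNN G h0 C (min i L) := by
  induction i with
  | zero => rfl
  | succ i ih =>
    funext v
    by_cases hi : i < L
    · rw [Nat.min_eq_left (Nat.succ_le_of_lt hi), runGNN, runGNN, ih,
        Nat.min_eq_left hi.le, truncateLayers, if_pos hi]
    · rw [Nat.min_eq_right (by omega), runGNN, ih, Nat.min_eq_right (by omega),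
        truncateLayers, if_neg hi]

def taggedLayers (D : Y → ℕ → X → (P2 → Multiset X) → Multiset X → X) :
    ℕ → Y × X → (P2 → Multiset (Y × X)) → Multiset (Y × X) → Y × X :=
  fun i s nbr glob => (s.1, D s.1 i s.2 (fun r => (nbr r).map Prod.snd) (glob.map Prod.snd))

theorem runGNN_taggedLayers (G : MRGraph P1 P2) (h0 : G.V → X)
    (D : Y → ℕ → X → (P2 → Multiset X) → Multiset X → X) (c : Y) (i : ℕ) :
    runGNN G (fun u => (c, h0 u)) (taggedLayers D) i =
      fun v => (c, runGNN G h0 (D c) i v) := by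
  induction i with
  | zero => rfl
  | succ i ih =>
    funext v
    simp only [runGNN, taggedLayers, ih, Multiset.map_map, Function.comp_def]

def clockedModel (C : Fin T → ℕ → X → (P2 → Multiset X) → Multiset X → X) (Lt : Fin T → ℕ) :
    ℕ → ℕ → X → (P2 → Multiset X) → Multiset X → X
  | c + 1 => if h : c < T then truncateLayers (C ⟨c, h⟩) (Lt ⟨c, h⟩) else fun _ x _ _ => x
  | 0 => fun _ x _ _ => x

def clockedEnc (enc : (P1 → Bool) → X → X) : (P1 → Bool) → ℕ × X → ℕ × X :=
  fun p s => (s.1 + 1, enc p s.2)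

theorem runT_clocked (G : TGraph P1 P2 T) (xinit : X) (enc : (P1 → Bool) → X → X)
    (C : Fin T → ℕ → X → (P2 → Multiset X) → Multiset X → X) (Lt : Fin T → ℕ) (L : ℕ)
    (hL : ∀ t, Lt t ≤ L) (t : ℕ) (ht : t ≤ T) (v : G.V) :
    runT G (0, xinit) (clockedEnc enc) (fun _ => taggedLayers (clockedModel C Lt))
        (fun _ => L) t v =
      (t, runT G xinit enc C Lt t v) := by
  induction t generalizing v with
  | zero => rfl
  | succ t ih =>
    have htT : t < T := ht
    have hinit : (fun u => clockedEnc enc (fun q => decide (G.unary ⟨t, htT⟩ q u))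
        (runT G (0, xinit) (clockedEnc enc) (fun _ => taggedLayers (clockedModel C Lt))
          (fun _ => L) t u)) =
        fun u => (t + 1, enc (fun q => decide (G.unary ⟨t, htT⟩ q u))
          (runT G xinit enc C Lt t u)) := by
      funext u
      rw [ih htT.le u]
      rfl
    rw [runT, runT, dif_pos htT, dif_pos htT]
    -- `erw`: the initial features live on `(G.snap _).V`, which is `G.V` only after unfolding.
    erw [hinit, runGNN_taggedLayers, clockedModel, dif_pos htT, runGNN_truncateLayers,
      Nat.min_eq_right (hL _)]
    rfl

end Homogenization

/-- Every (possibly inhomogeneous) R²-TGNN is equivalent, as a node-feature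
transformation on temporal graphs with `T` timestamps, to a homogeneous R²-TGNN in which
all timestamps share the same model: the homogeneous model's final feature determines the
original one via a fixed projection `π` (in the construction, reading off one of `T`
parallel feature slices). -/
theorem stmt17 {P1 P2 : Type} (T : ℕ) (X : Type) (xinit : X)
    (enc : (P1 → Bool) → X → X)
    (C : Fin T → ℕ → X → (P2 → Multiset X) → Multiset X → X)
    (Lt : Fin T → ℕ) :
    ∃ (X' : Type) (xinit' : X') (enc' : (P1 → Bool) → X' → X')
      (C' : ℕ → X' → (P2 → Multiset X') → Multiset X' → X') (L' : ℕ) (π : X' → X),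
      ∀ (G : TGraph P1 P2 T) (v : G.V),
        π (runT G xinit' enc' (fun _ => C') (fun _ => L') T v) =
          runT G xinit enc C Lt T v := by
  refine ⟨ℕ × X, (0, xinit), clockedEnc enc, taggedLayers (clockedModel C Lt),
    Finset.univ.sup Lt, Prod.snd, fun G v => ?_⟩
  rw [runT_clocked G xinit enc C Lt _ (fun t => Finset.le_sup (Finset.mem_univ t)) T le_rfl v]
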